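/- arXiv:1902.00681 — 4 statements merged into one kernel-verified Lean document; each statement's English description precedes it below -/
import Mathlib

section
/- Let d be a positive integer and let p, q ∈ ℝ^d have q(i) ≥ 0 and p(i) > 0 for all i. Then the positive chi-squared divergence is bounded by twice the generalized relative entropy: χ²₊(p,q) ≤ 2·Ent(q,p). -/
/-!
Termwise, with `t = q i / p i`, the `i`-th entropy term is `p i * klFun t`, where
`klFun t = t log t + 1 - t ≥ 0`. On the positive part `t ≤ 1`, the `χ²₊` term is `p i * (1 - t)²`,
and `(1 - t)² ≤ 2 klFun t` is `t² - 1 ≤ 2 t log t`, i.e. `sinh (log t) ≤ log t` for `log t ≤ 0`.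
-/

open Real

namespace InformationTheory

lemma mul_klFun_div (a : ℝ) {b : ℝ} (hb : b ≠ 0) :
    b * klFun (a / b) = a * log (a / b) - a + b := by
  rw [klFun_apply]
  field_simp
  ring

lemma sq_one_sub_le_two_mul_klFun {t : ℝ} (ht0 : 0 ≤ t) (ht1 : t ≤ 1) :
    (1 - t) ^ 2 ≤ 2 * klFun t := by
  rcases ht0.eq_or_lt with rfl | ht0
  · norm_num [klFun_zero]
  have hsinh : (t - t⁻¹) / 2 ≤ log t := by
    rw [← sinh_log ht0]
    exact sinh_le_self_iff.mpr (log_nonpos ht0.le ht1)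
  have hsq : t ^ 2 - 1 ≤ 2 * (t * log t) := by
    have := mul_le_mul_of_nonneg_left hsinh (by positivity : 0 ≤ 2 * t)
    field_simp at this
    linarith
  rw [klFun_apply]
  nlinarith

lemma sq_sub_div_le_two_mul_entropy_term {a b : ℝ} (ha : 0 ≤ a) (hb : 0 < b) (hab : a ≤ b) :
    (b - a) ^ 2 / b ≤ 2 * (a * log (a / b) - a + b) := by
  have ht1 : a / b ≤ 1 := (div_le_one hb).mpr hab
  calc (b - a) ^ 2 / b = b * (1 - a / b) ^ 2 := by field_simp
    _ ≤ b * (2 * klFun (a / b)) :=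
        mul_le_mul_of_nonneg_left (sq_one_sub_le_two_mul_klFun (by positivity) ht1) hb.le
    _ = 2 * (a * log (a / b) - a + b) := by rw [mul_left_comm, mul_klFun_div a hb.ne']

lemma entropy_term_nonneg {a b : ℝ} (ha : 0 ≤ a) (hb : 0 < b) :
    0 ≤ a * log (a / b) - a + b := by
  rw [← mul_klFun_div a hb.ne']
  exact mul_nonneg hb.le (klFun_nonneg (by positivity))

end InformationTheory

theorem stmt_0_general (d : ℕ) (p q : Fin d → ℝ)
    (hp : ∀ i, 0 < p i) (hq : ∀ i, 0 ≤ q i) :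
    (∑ i, if q i ≤ p i then (p i - q i) ^ 2 / p i else 0) ≤
      2 * ∑ i, (q i * Real.log (q i / p i) - q i + p i) := by
  rw [Finset.mul_sum]
  refine Finset.sum_le_sum fun i _ => ?_
  split_ifs with hqp
  · exact InformationTheory.sq_sub_div_le_two_mul_entropy_term (hq i) (hp i) hqp
  · exact mul_nonneg zero_le_two (InformationTheory.entropy_term_nonneg (hq i) (hp i))

theorem stmt_0 (d : ℕ) (hd : 0 < d) (p q : Fin d → ℝ)
    (hp : ∀ i, 0 < p i) (hq : ∀ i, 0 ≤ q i) :
    (∑ i, if q i ≤ p i then (p i - q i) ^ 2 / p i else 0) ≤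
      2 * ∑ i, (q i * Real.log (q i / p i) - q i + p i) :=
  stmt_0_general d p q hp hq
end

section
/- For every real t > 0 and every real s ≥ 0, one has s·log(s/t) − s + t ≥ (max(t − s, 0))²/(2t), where 0·log 0 is interpreted as 0. -/
lemma aux_mul_log (x : ℝ) (hx : 0 < x) (hx1 : x ≤ 1) :
    x ^ 2 - 1 ≤ 2 * x * Real.log x := by
  have hu0 : 0 ≤ -Real.log x := by
    simpa using Real.log_nonpos (le_of_lt hx) hx1
  have hsinh : -Real.log x ≤ (x⁻¹ - x) / 2 := by
    have h := Real.self_le_sinh_iff.mpr hu0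
    rw [Real.sinh_eq] at h
    have h1 : Real.exp (-Real.log x) = x⁻¹ := by rw [Real.exp_neg, Real.exp_log hx]
    have h2 : Real.exp (-(-Real.log x)) = x := by rw [neg_neg, Real.exp_log hx]
    rw [h1, h2] at h
    exact h
  have hxi : x * x⁻¹ = 1 := mul_inv_cancel₀ (ne_of_gt hx)
  nlinarith [mul_le_mul_of_nonneg_left hsinh (le_of_lt hx), hxi]

theorem stmt_1 (t s : ℝ) (ht : 0 < t) (hs : 0 ≤ s) :
    s * Real.log (s / t) - s + t ≥ (max (t - s) 0) ^ 2 / (2 * t) := by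
  rcases le_or_gt t s with hts | hts
  · -- s ≥ t : RHS = 0
    rw [max_eq_right (by linarith)]
    have hs0 : 0 < s := lt_of_lt_of_le ht hts
    have h1 : Real.log (t / s) ≤ t / s - 1 := Real.log_le_sub_one_of_pos (by positivity)
    have h2 : Real.log (s / t) = - Real.log (t / s) := by
      rw [Real.log_div (ne_of_gt hs0) (ne_of_gt ht), Real.log_div (ne_of_gt ht) (ne_of_gt hs0)]
      ring
    have h3 : t / s - 1 = (t - s) / s := by field_simp
    rw [h2]
    have h4 : s * Real.log (t / s) ≤ t - s := by
      calc s * Real.log (t / s) ≤ s * ((t - s) / s) := by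
            rw [← h3]; exact mul_le_mul_of_nonneg_left h1 hs
        _ = t - s := by field_simp
    simp only [ge_iff_le, zero_pow, ne_eq, OfNat.ofNat_ne_zero, not_false_eq_true, zero_div]
    linarith
  · rcases eq_or_lt_of_le hs with hs0 | hs0
    · -- s = 0
      rw [max_eq_left (by linarith), ← hs0, ge_iff_le, div_le_iff₀ (by positivity)]
      nlinarith
    · -- 0 < s < t
      rw [max_eq_left (by linarith)]
      have ht' : t ≠ 0 := ne_of_gt ht
      have hx : 0 < s / t := by positivity
      have hx1 : s / t ≤ 1 := by rw [div_le_one ht]; linarith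
      have key := aux_mul_log (s / t) hx hx1
      have e1 : s / t * t = s := div_mul_cancel₀ s ht'
      have h := mul_le_mul_of_nonneg_left key (le_of_lt (mul_pos ht ht))
      have r1 : t * t * ((s / t) ^ 2 - 1) = s ^ 2 - t ^ 2 := by
        field_simp
      have r2 : t * t * (2 * (s / t) * Real.log (s / t)) = 2 * t * (s * Real.log (s / t)) := by
        field_simp
      rw [r1, r2] at h
      rw [ge_iff_le, div_le_iff₀ (by positivity)]
      nlinarith [h]
end

section
/- Let T be a positive integer and let r_1, …, r_T, c_1, …, c_T, I_1, …, I_T be nonnegative reals. Suppose Λ ≥ 0, H ≥ 0, and L ≥ 0 satisfy: r_t² ≤ Λ·c_t·I_t for every t, Σ_{t=1}^T I_t ≤ H, and Σ_{t=1}^T c_t ≤ L + Σ_{t=1}^T r_t. Then Σ_{t=1}^T r_t ≤ √(Λ·H·L) + Λ·H. -/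
theorem stmt_5 (T : ℕ) (hT : 0 < T) (r c I : Fin T → ℝ)
    (hr : ∀ t, 0 ≤ r t) (hc : ∀ t, 0 ≤ c t) (hI : ∀ t, 0 ≤ I t)
    (Λ H L : ℝ) (hΛ : 0 ≤ Λ) (hH : 0 ≤ H) (hL : 0 ≤ L)
    (hratio : ∀ t, (r t) ^ 2 ≤ Λ * c t * I t)
    (hIsum : ∑ t, I t ≤ H)
    (hcsum : ∑ t, c t ≤ L + ∑ t, r t) :
    ∑ t, r t ≤ Real.sqrt (Λ * H * L) + Λ * H := by
  set R := ∑ t, r t with hR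
  have hR0 : 0 ≤ R := Finset.sum_nonneg fun t _ => hr t
  have hC0 : 0 ≤ ∑ t, c t := Finset.sum_nonneg fun t _ => hc t
  have hI0 : 0 ≤ ∑ t, I t := Finset.sum_nonneg fun t _ => hI t
  -- Step 1: R² ≤ Λ * (Σ c) * (Σ I) via Cauchy–Schwarz
  have key : R ^ 2 ≤ Λ * (∑ t, c t) * (∑ t, I t) := by
    have h1 : R ≤ ∑ t, Real.sqrt (Λ * c t) * Real.sqrt (I t) := by
      apply Finset.sum_le_sum
      intro t _
      rw [← Real.sqrt_mul (mul_nonneg hΛ (hc t))]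
      have := Real.sqrt_le_sqrt (hratio t)
      rwa [Real.sqrt_sq (hr t)] at this
    have h2 : (∑ t, Real.sqrt (Λ * c t) * Real.sqrt (I t)) ^ 2 ≤
        (∑ t, Real.sqrt (Λ * c t) ^ 2) * (∑ t, Real.sqrt (I t) ^ 2) :=
      Finset.sum_mul_sq_le_sq_mul_sq _ _ _
    have h3 : (∑ t, Real.sqrt (Λ * c t) ^ 2) = Λ * ∑ t, c t := by
      rw [Finset.mul_sum]
      exact Finset.sum_congr rfl fun t _ => Real.sq_sqrt (mul_nonneg hΛ (hc t))
    have h4 : (∑ t, Real.sqrt (I t) ^ 2) = ∑ t, I t :=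
      Finset.sum_congr rfl fun t _ => Real.sq_sqrt (hI t)
    have hs0 : 0 ≤ ∑ t, Real.sqrt (Λ * c t) * Real.sqrt (I t) :=
      le_trans hR0 h1
    calc R ^ 2 ≤ (∑ t, Real.sqrt (Λ * c t) * Real.sqrt (I t)) ^ 2 :=
          pow_le_pow_left₀ hR0 h1 2
      _ ≤ (∑ t, Real.sqrt (Λ * c t) ^ 2) * (∑ t, Real.sqrt (I t) ^ 2) := h2
      _ = Λ * (∑ t, c t) * (∑ t, I t) := by rw [h3, h4]
  -- Step 2: R² ≤ Λ H (L + R)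
  have key2 : R ^ 2 ≤ Λ * H * (L + R) := by
    calc R ^ 2 ≤ Λ * (∑ t, c t) * (∑ t, I t) := key
      _ ≤ Λ * (L + R) * H := by
          apply mul_le_mul (by nlinarith) hIsum hI0 (by positivity)
      _ = Λ * H * (L + R) := by ring
  -- Step 3: solve the quadratic
  have hs : Real.sqrt (Λ * H * L) ^ 2 = Λ * H * L :=
    Real.sq_sqrt (by positivity)
  have hs0 : 0 ≤ Real.sqrt (Λ * H * L) := Real.sqrt_nonneg _
  nlinarith [key2, hs, hs0, hR0, mul_nonneg hΛ hH, mul_nonneg (mul_nonneg hΛ hH) hs0, sq_nonneg (R + Real.sqrt (Λ * H * L)), mul_nonneg hs0 hR0]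
end

section
/- Let f : ℝ → ℝ be three times differentiable on an open interval containing [0,1], with f''(x) ≥ 0 and f'''(x) ≤ 0 for all x ∈ [0,1]. Then for all a, b ∈ [0,1]: f(b) ≥ f(a) + f'(a)·(b − a) + (f''(a)/2)·(max(a − b, 0))². -/
/-!
For `b ≥ a` the bound is the tangent-line inequality of the convex function `f`. For `b < a`,
`f''' ≤ 0` makes `f''` antitone, so `f'' ≥ f''(a)` on `[b, a]`; integrating twice from `a`
leftwards gives `f'(x) ≤ f'(a) + f''(a) (x - a)` and then the quadratic lower bound at `b`.
-/

open Set

section MonotoneOfHasDerivAt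

variable {f f' : ℝ → ℝ} {a b : ℝ}

theorem monotoneOn_Icc_of_hasDerivAt_nonneg (hf : ∀ x ∈ Icc a b, HasDerivAt f (f' x) x)
    (hf' : ∀ x ∈ Ioo a b, 0 ≤ f' x) : MonotoneOn f (Icc a b) :=
  monotoneOn_of_hasDerivWithinAt_nonneg (convex_Icc a b)
    (fun x hx => (hf x hx).continuousAt.continuousWithinAt)
    (fun x hx => (hf x (interior_subset hx)).hasDerivWithinAt)
    (fun x hx => hf' x (by rwa [interior_Icc] at hx))

theorem antitoneOn_Icc_of_hasDerivAt_nonpos (hf : ∀ x ∈ Icc a b, HasDerivAt f (f' x) x)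
    (hf' : ∀ x ∈ Ioo a b, f' x ≤ 0) : AntitoneOn f (Icc a b) :=
  antitoneOn_of_hasDerivWithinAt_nonpos (convex_Icc a b)
    (fun x hx => (hf x hx).continuousAt.continuousWithinAt)
    (fun x hx => (hf x (interior_subset hx)).hasDerivWithinAt)
    (fun x hx => hf' x (by rwa [interior_Icc] at hx))

end MonotoneOfHasDerivAt

section TaylorBounds

variable {f f' f'' f''' : ℝ → ℝ} {a b : ℝ}

theorem tangent_le_of_hasDerivAt_of_second_deriv_nonneg (hab : a ≤ b)
    (hf : ∀ x ∈ Icc a b, HasDerivAt f (f' x) x)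
    (hf' : ∀ x ∈ Icc a b, HasDerivAt f' (f'' x) x) (hf'' : ∀ x ∈ Icc a b, 0 ≤ f'' x) :
    f a + f' a * (b - a) ≤ f b := by
  have hf'_mono : MonotoneOn f' (Icc a b) :=
    monotoneOn_Icc_of_hasDerivAt_nonneg hf' fun x hx => hf'' x (Ioo_subset_Icc_self hx)
  have hg : ∀ x ∈ Icc a b,
      HasDerivAt (fun y => f y - f' a * (y - a)) (f' x - f' a) x := fun x hx =>
    ((hf x hx).sub (((hasDerivAt_id x).sub_const a).const_mul (f' a))).congr_deriv (by simp)
  have hg_mono := monotoneOn_Icc_of_hasDerivAt_nonneg hg fun x hx =>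
    sub_nonneg.2 (hf'_mono (left_mem_Icc.2 hab) (Ioo_subset_Icc_self hx) hx.1.le)
  have := hg_mono (left_mem_Icc.2 hab) (right_mem_Icc.2 hab) hab
  simp only [sub_self, mul_zero, sub_zero] at this
  linarith

theorem quadratic_le_of_hasDerivAt_of_third_deriv_nonpos (hba : b ≤ a)
    (hf : ∀ x ∈ Icc b a, HasDerivAt f (f' x) x)
    (hf' : ∀ x ∈ Icc b a, HasDerivAt f' (f'' x) x)
    (hf'' : ∀ x ∈ Icc b a, HasDerivAt f'' (f''' x) x) (hf''' : ∀ x ∈ Icc b a, f''' x ≤ 0) :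
    f a + f' a * (b - a) + f'' a / 2 * (a - b) ^ 2 ≤ f b := by
  have hf''_anti : AntitoneOn f'' (Icc b a) :=
    antitoneOn_Icc_of_hasDerivAt_nonpos hf'' fun x hx => hf''' x (Ioo_subset_Icc_self hx)
  have hh : ∀ x ∈ Icc b a,
      HasDerivAt (fun y => f' y - f'' a * (y - a)) (f'' x - f'' a) x := fun x hx =>
    ((hf' x hx).sub (((hasDerivAt_id x).sub_const a).const_mul (f'' a))).congr_deriv (by simp)
  have hh_mono := monotoneOn_Icc_of_hasDerivAt_nonneg hh fun x hx =>
    sub_nonneg.2 (hf''_anti (Ioo_subset_Icc_self hx) (right_mem_Icc.2 hba) hx.2.le)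
  have hf'_le : ∀ x ∈ Icc b a, f' x ≤ f' a + f'' a * (x - a) := fun x hx => by
    have := hh_mono hx (right_mem_Icc.2 hba) hx.2
    simp only [sub_self, mul_zero, sub_zero] at this
    linarith
  have hg : ∀ x ∈ Icc b a, HasDerivAt (fun y => f y - f' a * (y - a) - f'' a / 2 * (y - a) ^ 2)
      (f' x - f' a - f'' a * (x - a)) x := fun x hx => by
    have hl := ((hasDerivAt_id x).sub_const a).const_mul (f' a)
    have hq := (((hasDerivAt_id x).sub_const a).pow 2).const_mul (f'' a / 2)
    exact (((hf x hx).sub hl).sub hq).congr_deriv (by simp; ring)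
  have hg_anti := antitoneOn_Icc_of_hasDerivAt_nonpos hg fun x hx => by
    linarith [hf'_le x (Ioo_subset_Icc_self hx)]
  have := hg_anti (left_mem_Icc.2 hba) (right_mem_Icc.2 hba) hba
  simp only [sub_self, mul_zero, sub_zero, ne_eq, OfNat.ofNat_ne_zero, not_false_eq_true,
    zero_pow] at this
  linarith [sub_sq_comm a b]

end TaylorBounds

theorem stmt_12 (f : ℝ → ℝ) (u v : ℝ) (hu : u < 0) (hv : 1 < v)
    (hf1 : ∀ x ∈ Set.Ioo u v, DifferentiableAt ℝ f x)
    (hf2 : ∀ x ∈ Set.Ioo u v, DifferentiableAt ℝ (deriv f) x)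
    (hf3 : ∀ x ∈ Set.Ioo u v, DifferentiableAt ℝ (deriv (deriv f)) x)
    (hf'' : ∀ x ∈ Set.Icc (0 : ℝ) 1, 0 ≤ deriv (deriv f) x)
    (hf''' : ∀ x ∈ Set.Icc (0 : ℝ) 1, deriv (deriv (deriv f)) x ≤ 0) :
    ∀ a ∈ Set.Icc (0 : ℝ) 1, ∀ b ∈ Set.Icc (0 : ℝ) 1,
      f b ≥ f a + deriv f a * (b - a) + (deriv (deriv f) a / 2) * (max (a - b) 0) ^ 2 := by
  intro a ha b hb
  have hsub : Icc (0 : ℝ) 1 ⊆ Ioo u v := Icc_subset_Ioo hu hv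
  rcases le_or_gt a b with hab | hba
  · have hI : Icc a b ⊆ Icc 0 1 := Icc_subset_Icc ha.1 hb.2
    rw [max_eq_right (by linarith), zero_pow two_ne_zero, mul_zero, add_zero]
    exact tangent_le_of_hasDerivAt_of_second_deriv_nonneg hab
      (fun x hx => (hf1 x (hsub (hI hx))).hasDerivAt)
      (fun x hx => (hf2 x (hsub (hI hx))).hasDerivAt) (fun x hx => hf'' x (hI hx))
  · have hI : Icc b a ⊆ Icc 0 1 := Icc_subset_Icc hb.1 ha.2
    rw [max_eq_left (by linarith)]
    exact quadratic_le_of_hasDerivAt_of_third_deriv_nonpos hba.le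
      (fun x hx => (hf1 x (hsub (hI hx))).hasDerivAt)
      (fun x hx => (hf2 x (hsub (hI hx))).hasDerivAt)
      (fun x hx => (hf3 x (hsub (hI hx))).hasDerivAt) (fun x hx => hf''' x (hI hx))
end
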